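/- arXiv:1306.3684 — 2 statements merged into one kernel-verified Lean document; each statement's English description precedes it below -/
import Mathlib

section
/- Let G, Q, P be real n×n matrices, H a real n×m matrix, and R a real m×m matrix, with P, Q, R symmetric and S := R + HᵀPH invertible. Suppose P solves the discrete algebraic Riccati equation P = Q + GᵀPG − GᵀPH·S⁻¹·HᵀPG, and set K = S⁻¹HᵀPG. Let x : ℕ → ℝⁿ satisfy the closed-loop recursion x(k+1) = (G − HK)x(k), and set u(k) = −Kx(k). Then for every N, ∑_{k=0}^{N−1} [x(k)ᵀQx(k) + u(k)ᵀRu(k)] = x(0)ᵀPx(0) − x(N)ᵀPx(N); in particular, if x(N)ᵀPx(N) → 0 as N → ∞, the total infinite-horizon cost ∑_{k=0}^{∞} [x(k)ᵀQx(k) + u(k)ᵀRu(k)] equals x(0)ᵀPx(0). -/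
open Matrix Filter

/-! With `K = S⁻¹ Hᵀ P G` the Riccati equation becomes the closed-loop Lyapunov identity
`Q + Kᵀ R K + (G - H K)ᵀ P (G - H K) = P`. Hence the stage cost at `x` under `u = -K x` is
`V x - V ((G - H K) x)` for `V x = xᵀ P x`, and the partial costs telescope. -/

section

variable {α : Type*} [CommRing α] {ι κ : Type*} [Fintype ι] [Fintype κ]

theorem dotProduct_mulVec_mulVec_self (A : Matrix κ ι α) (B : Matrix κ κ α) (v : ι → α) :
    A *ᵥ v ⬝ᵥ B *ᵥ (A *ᵥ v) = v ⬝ᵥ (Aᵀ * B * A) *ᵥ v := by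
  rw [Matrix.mul_assoc, ← mulVec_mulVec, ← mulVec_mulVec, dotProduct_mulVec v Aᵀ,
    vecMul_transpose]

/-- `Kᵀ (R + Hᵀ P H) K = Kᵀ Hᵀ P G` cancels one of the two cross terms of the closed-loop form. -/
theorem closedLoop_cost_eq (G P Q : Matrix ι ι α) (H : Matrix ι κ α) (R : Matrix κ κ α)
    (K : Matrix κ ι α) (hK : (R + Hᵀ * P * H) * K = Hᵀ * P * G) :
    Q + Kᵀ * R * K + (G - H * K)ᵀ * P * (G - H * K) = Q + Gᵀ * P * G - Gᵀ * P * H * K := by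
  calc Q + Kᵀ * R * K + (G - H * K)ᵀ * P * (G - H * K)
      = Q + Gᵀ * P * G - Gᵀ * P * H * K - Kᵀ * (Hᵀ * P * G) + Kᵀ * ((R + Hᵀ * P * H) * K) := by
        simp only [transpose_sub, Matrix.transpose_mul, Matrix.sub_mul, Matrix.mul_sub,
          Matrix.add_mul, Matrix.mul_add, Matrix.mul_assoc]
        abel
    _ = Q + Gᵀ * P * G - Gᵀ * P * H * K := by rw [hK]; abel

theorem stageCost_eq_sub_of_lyapunov {Q P A : Matrix ι ι α} {R : Matrix κ κ α}
    {K : Matrix κ ι α} (hL : Q + Kᵀ * R * K + Aᵀ * P * A = P) (v : ι → α) :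
    v ⬝ᵥ Q *ᵥ v + -(K *ᵥ v) ⬝ᵥ R *ᵥ -(K *ᵥ v) = v ⬝ᵥ P *ᵥ v - A *ᵥ v ⬝ᵥ P *ᵥ (A *ᵥ v) := by
  rw [mulVec_neg, dotProduct_neg, neg_dotProduct, neg_neg, dotProduct_mulVec_mulVec_self,
    dotProduct_mulVec_mulVec_self, eq_sub_iff_add_eq, ← dotProduct_add, ← dotProduct_add,
    ← add_mulVec, ← add_mulVec, hL]

end

theorem lqr_feedback_achieves_value_general
    {n m : ℕ} (G Q P : Matrix (Fin n) (Fin n) ℝ)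
    (H : Matrix (Fin n) (Fin m) ℝ) (R : Matrix (Fin m) (Fin m) ℝ)
    (S : Matrix (Fin m) (Fin m) ℝ) (hS : S = R + Hᵀ * P * H)
    (hSinv : IsUnit S)
    (hRiccati : P = Q + Gᵀ * P * G - Gᵀ * P * H * S⁻¹ * (Hᵀ * P * G))
    (K : Matrix (Fin m) (Fin n) ℝ) (hK : K = S⁻¹ * (Hᵀ * P * G))
    (x : ℕ → (Fin n → ℝ))
    (hdyn : ∀ k : ℕ, x (k + 1) = (G - H * K).mulVec (x k))
    (u : ℕ → (Fin m → ℝ)) (hu : ∀ k : ℕ, u k = -(K.mulVec (x k))) :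
    (∀ N : ℕ,
        ∑ k ∈ Finset.range N, (x k ⬝ᵥ Q.mulVec (x k) + u k ⬝ᵥ R.mulVec (u k)) =
          x 0 ⬝ᵥ P.mulVec (x 0) - x N ⬝ᵥ P.mulVec (x N)) ∧
      (Tendsto (fun N : ℕ => x N ⬝ᵥ P.mulVec (x N)) atTop (nhds 0) →
        Tendsto
          (fun N : ℕ =>
            ∑ k ∈ Finset.range N, (x k ⬝ᵥ Q.mulVec (x k) + u k ⬝ᵥ R.mulVec (u k)))
          atTop (nhds (x 0 ⬝ᵥ P.mulVec (x 0)))) := by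
  have hSK : (R + Hᵀ * P * H) * K = Hᵀ * P * G := by
    rw [hK, ← hS, ← Matrix.mul_assoc, mul_nonsing_inv S ((isUnit_iff_isUnit_det S).mp hSinv),
      Matrix.one_mul]
  have hLyap : Q + Kᵀ * R * K + (G - H * K)ᵀ * P * (G - H * K) = P := by
    rw [closedLoop_cost_eq G P Q H R K hSK, hK, ← Matrix.mul_assoc (Gᵀ * P * H), ← hRiccati]
  have hsum (N : ℕ) :
      ∑ k ∈ Finset.range N, (x k ⬝ᵥ Q.mulVec (x k) + u k ⬝ᵥ R.mulVec (u k)) =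
        x 0 ⬝ᵥ P.mulVec (x 0) - x N ⬝ᵥ P.mulVec (x N) := by
    rw [← Finset.sum_range_sub' (fun k => x k ⬝ᵥ P *ᵥ x k)]
    refine Finset.sum_congr rfl fun k _ => ?_
    rw [hu, hdyn, stageCost_eq_sub_of_lyapunov hLyap]
  refine ⟨hsum, fun hV => ?_⟩
  simpa only [hsum, sub_zero] using (tendsto_const_nhds (x := x 0 ⬝ᵥ P *ᵥ x 0)).sub hV

/-- The LQR feedback `u = -Kx` achieves cost exactly `x(0)ᵀ P x(0)`: along the
closed-loop trajectory `x(k+1) = (G - HK) x(k)` the partial costs telescope to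
`x(0)ᵀPx(0) - x(N)ᵀPx(N)`, and if `x(N)ᵀPx(N) → 0` the infinite-horizon cost
equals `x(0)ᵀ P x(0)`. -/
theorem lqr_feedback_achieves_value
    {n m : ℕ} (G Q P : Matrix (Fin n) (Fin n) ℝ)
    (H : Matrix (Fin n) (Fin m) ℝ) (R : Matrix (Fin m) (Fin m) ℝ)
    (hP : Pᵀ = P) (hQ : Qᵀ = Q) (hR : Rᵀ = R)
    (S : Matrix (Fin m) (Fin m) ℝ) (hS : S = R + Hᵀ * P * H)
    (hSinv : IsUnit S)
    (hRiccati : P = Q + Gᵀ * P * G - Gᵀ * P * H * S⁻¹ * (Hᵀ * P * G))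
    (K : Matrix (Fin m) (Fin n) ℝ) (hK : K = S⁻¹ * (Hᵀ * P * G))
    (x : ℕ → (Fin n → ℝ))
    (hdyn : ∀ k : ℕ, x (k + 1) = (G - H * K).mulVec (x k))
    (u : ℕ → (Fin m → ℝ)) (hu : ∀ k : ℕ, u k = -(K.mulVec (x k))) :
    (∀ N : ℕ,
        ∑ k ∈ Finset.range N, (x k ⬝ᵥ Q.mulVec (x k) + u k ⬝ᵥ R.mulVec (u k)) =
          x 0 ⬝ᵥ P.mulVec (x 0) - x N ⬝ᵥ P.mulVec (x N)) ∧
      (Tendsto (fun N : ℕ => x N ⬝ᵥ P.mulVec (x N)) atTop (nhds 0) →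
        Tendsto
          (fun N : ℕ =>
            ∑ k ∈ Finset.range N, (x k ⬝ᵥ Q.mulVec (x k) + u k ⬝ᵥ R.mulVec (u k)))
          atTop (nhds (x 0 ⬝ᵥ P.mulVec (x 0)))) :=
  lqr_feedback_achieves_value_general G Q P H R S hS hSinv hRiccati K hK x hdyn u hu
end

section
/- Let Φ₁, Φ₂ be real n×n matrices, P a real symmetric positive definite n×n matrix, and a₁, a₂, a, r real numbers with a₁ ≥ 1, 0 < a₂ ≤ 1, 0 ≤ r ≤ 1, a > 1, a₁^r · a₂^{1−r} ≥ a (real powers), and suppose a_i⁻²·P − ΦᵢᵀPΦᵢ is positive semidefinite for i = 1, 2. Let s : ℕ → {1, 2} be a switching signal such that for every k ∈ ℕ the count n₁(k) = #{j < k : s(j) = 1} satisfies n₁(k) ≥ r·k, and let x : ℕ → ℝⁿ satisfy x(k+1) = Φ_{s(k)}x(k). Then x(k)ᵀPx(k) ≤ a^{−2k} · x(0)ᵀPx(0) for every k ∈ ℕ. -/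
open Matrix

/-!
Along a trajectory the BMI of the active mode gives `V(x(k+1)) ≤ a_{s(k)}⁻² V(x(k))` for
`V(x) = xᵀ P x`, so `V(x(k))` is at most `V(x(0))` divided by `∏_{j<k} a_{s(j)}² =
(a₁^{n₁} a₂^{k-n₁})²`. As `a₁ ≥ 1 ≥ a₂`, the bound `n₁ ≥ r k` gives
`a₁^{n₁} a₂^{k-n₁} ≥ a₁^{r k} a₂^{(1-r) k} ≥ a^k`.
-/

open Finset

theorem dotProduct_mulVec_mulVec_le_of_posSemidef {ι : Type*} [Fintype ι]
    {M P : Matrix ι ι ℝ} {c : ℝ} (h : (c • P - Mᵀ * P * M).PosSemidef) (v : ι → ℝ) :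
    M *ᵥ v ⬝ᵥ P *ᵥ (M *ᵥ v) ≤ c * (v ⬝ᵥ P *ᵥ v) := by
  have hv := h.dotProduct_mulVec_nonneg v
  rw [star_trivial, sub_mulVec, dotProduct_sub, smul_mulVec, dotProduct_smul, smul_eq_mul,
    sub_nonneg, ← mulVec_mulVec, ← mulVec_mulVec, dotProduct_mulVec, vecMul_transpose] at hv
  exact hv

theorem le_prod_mul_of_succ_le_mul {R : Type*} [CommSemiring R] [PartialOrder R]
    [IsOrderedRing R] {V c : ℕ → R} (hc : ∀ k, 0 ≤ c k) (h : ∀ k, V (k + 1) ≤ c k * V k) :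
    ∀ k, V k ≤ (∏ j ∈ range k, c j) * V 0
  | 0 => by simp
  | k + 1 =>
    calc V (k + 1) ≤ c k * V k := h k
      _ ≤ c k * ((∏ j ∈ range k, c j) * V 0) :=
        mul_le_mul_of_nonneg_left (le_prod_mul_of_succ_le_mul hc h k) (hc k)
      _ = (∏ j ∈ range (k + 1), c j) * V 0 := by rw [prod_range_succ]; ring

theorem prod_comp_fin_two {ι M : Type*} [CommMonoid M] (t : Finset ι) (s : ι → Fin 2)
    (f : Fin 2 → M) :
    ∏ j ∈ t, f (s j) = f 0 ^ #{j ∈ t | s j = 0} * f 1 ^ #{j ∈ t | s j = 1} := by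
  rw [← prod_fiberwise' t s f, Fin.prod_univ_two, prod_const, prod_const]

theorem card_filter_fin_two_add {ι : Type*} (t : Finset ι) (s : ι → Fin 2) :
    #{j ∈ t | s j = 0} + #{j ∈ t | s j = 1} = #t := by
  rw [← Fin.sum_univ_two fun i ↦ #{j ∈ t | s j = i},
    card_eq_sum_card_fiberwise (f := s) fun _ _ ↦ mem_univ _]

theorem pow_le_pow_mul_pow_of_le_rpow_mul_rpow {A b₀ b₁ r : ℝ} {n₀ n₁ k : ℕ} (hA : 0 ≤ A)
    (hb₀ : 1 ≤ b₀) (hb₁ : 0 < b₁) (hb₁' : b₁ ≤ 1) (hrate : A ≤ b₀ ^ r * b₁ ^ (1 - r))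
    (hk : n₀ + n₁ = k) (hn₀ : r * k ≤ n₀) :
    A ^ k ≤ b₀ ^ n₀ * b₁ ^ n₁ := by
  have hb₀' : 0 ≤ b₀ := zero_le_one.trans hb₀
  have hn₁ : (n₁ : ℝ) ≤ (1 - r) * k := by
    rw [← hk, Nat.cast_add] at hn₀ ⊢
    linarith
  calc A ^ k = A ^ (k : ℝ) := (Real.rpow_natCast A k).symm
    _ ≤ (b₀ ^ r * b₁ ^ (1 - r)) ^ (k : ℝ) := by gcongr
    _ = b₀ ^ (r * k) * b₁ ^ ((1 - r) * k) := by
      rw [Real.mul_rpow (by positivity) (by positivity), ← Real.rpow_mul hb₀',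
        ← Real.rpow_mul hb₁.le]
    _ ≤ b₀ ^ (n₀ : ℝ) * b₁ ^ (n₁ : ℝ) := by
      exact mul_le_mul (Real.rpow_le_rpow_of_exponent_le hb₀ hn₀)
        (Real.rpow_le_rpow_of_exponent_ge hb₁ hb₁' hn₁) (by positivity) (by positivity)
    _ = b₀ ^ n₀ * b₁ ^ n₁ := by rw [Real.rpow_natCast, Real.rpow_natCast]

/-- Mode `0` is the paper's transmission mode 1 and mode `1` its packet-loss mode 2. -/
theorem ncs_switched_lyapunov_decay_general
    {n : ℕ} (Φ : Fin 2 → Matrix (Fin n) (Fin n) ℝ)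
    (P : Matrix (Fin n) (Fin n) ℝ) (a : Fin 2 → ℝ) (A r : ℝ)
    (hP : P.PosDef)
    (ha₁ : 1 ≤ a 0) (ha₂pos : 0 < a 1) (ha₂ : a 1 ≤ 1)
    (hA : 1 < A)
    (hrate : A ≤ (a 0) ^ r * (a 1) ^ (1 - r))
    (hpsd : ∀ i : Fin 2, (((a i) ^ 2)⁻¹ • P - (Φ i)ᵀ * P * (Φ i)).PosSemidef)
    (s : ℕ → Fin 2)
    (hcount : ∀ k : ℕ,
      r * k ≤ (((Finset.range k).filter fun j => s j = 0).card : ℝ))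
    (x : ℕ → (Fin n → ℝ))
    (hdyn : ∀ k : ℕ, x (k + 1) = (Φ (s k)).mulVec (x k)) :
    ∀ k : ℕ, x k ⬝ᵥ P.mulVec (x k) ≤ (A ^ (2 * k))⁻¹ * (x 0 ⬝ᵥ P.mulVec (x 0)) := by
  intro k
  have hdecay := le_prod_mul_of_succ_le_mul (V := fun k ↦ x k ⬝ᵥ P *ᵥ x k)
    (c := fun j ↦ (a (s j) ^ 2)⁻¹) (fun j ↦ by positivity) (fun j ↦ by
      simp only [hdyn j]; exact dotProduct_mulVec_mulVec_le_of_posSemidef (hpsd (s j)) _) k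
  rw [prod_inv_distrib, prod_pow, prod_comp_fin_two] at hdecay
  have hgrowth := pow_le_pow_mul_pow_of_le_rpow_mul_rpow (by linarith) ha₁ ha₂pos ha₂ hrate
    ((card_filter_fin_two_add (range k) s).trans (card_range k)) (hcount k)
  refine hdecay.trans (mul_le_mul_of_nonneg_right ?_ ?_)
  · rw [pow_mul']
    gcongr
  · simpa using hP.posSemidef.dotProduct_mulVec_nonneg (x 0)

/-- Lyapunov decay for the two-mode switched system modeling an NCS with
packet loss: mode `0` (successful transmission, rate `a 0 = a₁ ≥ 1`) occurs at
least a fraction `r` of the time, mode `1` (packet loss, rate `0 < a 1 = a₂ ≤ 1`),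
the BMI conditions `aᵢ⁻² • P - Φᵢᵀ P Φᵢ ⪰ 0` hold and `a₁^r a₂^(1-r) ≥ a > 1`.
Then the quadratic Lyapunov value decays as `a ^ (-2 k)`. -/
theorem ncs_switched_lyapunov_decay
    {n : ℕ} (Φ : Fin 2 → Matrix (Fin n) (Fin n) ℝ)
    (P : Matrix (Fin n) (Fin n) ℝ) (a : Fin 2 → ℝ) (A r : ℝ)
    (hP : P.PosDef)
    (ha₁ : 1 ≤ a 0) (ha₂pos : 0 < a 1) (ha₂ : a 1 ≤ 1)
    (hr0 : 0 ≤ r) (hr1 : r ≤ 1) (hA : 1 < A)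
    (hrate : A ≤ (a 0) ^ r * (a 1) ^ (1 - r))
    (hpsd : ∀ i : Fin 2, (((a i) ^ 2)⁻¹ • P - (Φ i)ᵀ * P * (Φ i)).PosSemidef)
    (s : ℕ → Fin 2)
    (hcount : ∀ k : ℕ,
      r * k ≤ (((Finset.range k).filter fun j => s j = 0).card : ℝ))
    (x : ℕ → (Fin n → ℝ))
    (hdyn : ∀ k : ℕ, x (k + 1) = (Φ (s k)).mulVec (x k)) :
    ∀ k : ℕ, x k ⬝ᵥ P.mulVec (x k) ≤ (A ^ (2 * k))⁻¹ * (x 0 ⬝ᵥ P.mulVec (x 0)) :=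
  ncs_switched_lyapunov_decay_general Φ P a A r hP ha₁ ha₂pos ha₂ hA hrate hpsd s hcount x hdyn
end
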